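/- For every n ∈ ℤ^p, the Möbius function evaluated at n is a valuative function of the polymatroid: for any polymatroids 𝒫_1,…,𝒫_k on [p] with cage m and any integers a_1,…,a_k such that Σ_{i=1}^{k} a_i · 1_{B(𝒫_i)}(v) = 0 for all v ∈ ℝ^p, one has Σ_{i=1}^{k} a_i · μ_{𝒫_i}(n) = 0. -/

import Mathlib

/-!
Unfolding the recursion, `μ_𝒫(n) = 1_{I(𝒫)}(n) - ∑_{w > n} μ_𝒫(w)` for `n ≥ 0`, where `w` runs
over the box `[0, m]`, which does not depend on `𝒫`. By downward induction on `|n|` it therefore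
suffices that `𝒫 ↦ 1_{I(𝒫)}(n)` is valuative. For `n ≥ 0`, `n ∈ I(𝒫)` iff the compact convex set
`B(𝒫) ∩ (n + ℝ_{≥0}^p)` is nonempty (greedy augmentation of integer independent vectors), and
nonemptiness, i.e. the Euler characteristic, respects linear relations among indicators of compact
convex sets: on `ℝ`, comparing the relation at `t` and just left of `t` yields the same relation
among the indicators of "`t` is the left endpoint", and on products one passes to fibres and
projections.
-/

open scoped BigOperators

attribute [local instance] Classical.propDecidable

namespace CavePaper

variable {p : ℕ}

/-- `rk` is the rank function of a polymatroid on `[p]` with cage `m`: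
normalized, monotone, submodular, and `rk {i} ≤ m i` for all `i`. -/
def IsPolymatroid (m : Fin p → ℕ) (rk : Finset (Fin p) → ℕ) : Prop :=
  rk ∅ = 0 ∧
    (∀ J₁ J₂ : Finset (Fin p), J₁ ⊆ J₂ → rk J₁ ≤ rk J₂) ∧
    (∀ J₁ J₂ : Finset (Fin p), rk (J₁ ∩ J₂) + rk (J₁ ∪ J₂) ≤ rk J₁ + rk J₂) ∧
    (∀ i : Fin p, rk {i} ≤ m i)

/-- An integer point lies in the independence polytope `I(𝒫)`. -/
def inIndep (rk : Finset (Fin p) → ℕ) (v : Fin p → ℤ) : Prop :=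
  (∀ i, 0 ≤ v i) ∧ ∀ J : Finset (Fin p), ∑ j ∈ J, v j ≤ (rk J : ℤ)

/-- An integer point lies in the base polytope `B(𝒫)`. -/
def inBase (rk : Finset (Fin p) → ℕ) (v : Fin p → ℤ) : Prop :=
  inIndep rk v ∧ ∑ i, v i = (rk Finset.univ : ℤ)

/-- The indicator function `1_𝒫` of the base polytope, at integer points. -/
noncomputable def baseInd (rk : Finset (Fin p) → ℕ) (v : Fin p → ℤ) : ℤ :=
  if inBase rk v then 1 else 0

/-- `max_{i<j} 1_𝒫(n - e_i + e_j)`. -/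
noncomputable def cmax (rk : Finset (Fin p) → ℕ) (n : Fin p → ℕ) (i : Fin p) : ℤ :=
  if ∃ j, i < j ∧ inBase rk
      (fun k => (n k : ℤ) - (if k = i then 1 else 0) + (if k = j then 1 else 0))
    then 1 else 0

/-- The cave polynomial of a polymatroid: the expansion of
`∑_{n ∈ ℕ^p, |n| = rk(𝒫)} 1_𝒫(n) ∏_{i=1}^{p-1} (1 - max_{i<j} 1_𝒫(n-e_i+e_j) tᵢ⁻¹) tⁿ`.
Each factor `(1 - cᵢ tᵢ⁻¹) tᵢ^{nᵢ}` is written as `tᵢ^{nᵢ} - cᵢ tᵢ^{nᵢ-1}`, which is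
legitimate since `cᵢ ≠ 0` forces `nᵢ ≥ 1`; the factor for the last index is `tᵢ^{nᵢ}`. -/
noncomputable def cavePoly (rk : Finset (Fin p) → ℕ) : MvPolynomial (Fin p) ℤ :=
  ∑ n ∈ Finset.Nat.antidiagonalTuple p (rk Finset.univ),
    MvPolynomial.C (baseInd rk (fun i => (n i : ℤ))) *
      ∏ i : Fin p,
        if (i : ℕ) < p - 1 then
          MvPolynomial.X i ^ (n i) -
            MvPolynomial.C (cmax rk n i) * MvPolynomial.X i ^ (n i - 1)
        else MvPolynomial.X i ^ (n i)

/-- A set `S ⊆ ℤ^q` is M-convex: it is nonempty, finite, and satisfies the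
symmetric exchange property. -/
def MConvex {q : ℕ} (S : Set (Fin q → ℤ)) : Prop :=
  S.Nonempty ∧ S.Finite ∧
    ∀ u ∈ S, ∀ v ∈ S, ∀ i, v i < u i →
      ∃ j, u j < v j ∧
        (fun k => u k - (if k = i then 1 else 0) + (if k = j then 1 else 0)) ∈ S

/-- The Möbius function `μ_𝒫 : ℤ^p → ℤ` of a polymatroid: `0` outside `I(𝒫)`,
`1` on `B(𝒫)`, and `1 - ∑_{w ∈ (n + ℤ_{>0}^p) ∩ I(𝒫)} μ_𝒫(w)` on `I(𝒫) \ B(𝒫)`.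
(Every integer point of `I(𝒫)` lies in the box `0 ≤ w i ≤ rk {i}`; the redundant
condition `∑ n < ∑ w` — automatic for `p ≥ 1` — ensures termination.) -/
noncomputable def mobius (rk : Finset (Fin p) → ℕ) (n : Fin p → ℤ) : ℤ :=
  if inIndep rk n then
    if inBase rk n then 1
    else
      1 - ∑ w ∈ ((Finset.Icc (fun _ => (0 : ℤ)) (fun i => (rk {i} : ℤ))).filter
            (fun w => (∀ i, n i < w i) ∧ (∑ i, n i) < (∑ i, w i) ∧ inIndep rk w)).attach,
          mobius rk w.1
  else 0
termination_by ((rk Finset.univ : ℤ) - ∑ i, n i).toNat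
decreasing_by
  have hm := w.2
  simp only [Finset.mem_filter] at hm
  have h2 : (∑ i, w.1 i) ≤ (rk Finset.univ : ℤ) := by
    simpa using hm.2.2.2.2 Finset.univ
  have _h1 : (∑ i, n i) < ∑ i, w.1 i := hm.2.2.1
  omega

/-- The base polytope `B(𝒫) ⊆ ℝ^p`. -/
def BaseSet (rk : Finset (Fin p) → ℕ) : Set (Fin p → ℝ) :=
  {v | (∀ i, 0 ≤ v i) ∧ (∑ i, v i = (rk Finset.univ : ℝ)) ∧
    ∀ J : Finset (Fin p), ∑ j ∈ J, v j ≤ (rk J : ℝ)}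

/-- The rank function `rk_S(J) = max_{u ∈ S} ∑_{j∈J} u_j` of a (finite, nonempty)
M-convex set `S ⊆ ℕ^p`. -/
noncomputable def rkOf (S : Set (Fin p → ℤ)) (J : Finset (Fin p)) : ℕ :=
  sSup ((fun u => (∑ j ∈ J, u j).toNat) '' S)

end CavePaper

section

open Filter Topology

theorem Set.OrdConnected.eventually_nhdsLT_mem_iff {S : Set ℝ} (hconv : S.OrdConnected)
    (hS : IsClosed S) (t : ℝ) : ∀ᶠ s in 𝓝[<] t, s ∈ S ↔ t ∈ S ∧ t ∉ lowerBounds S := by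
  by_cases ht : t ∈ S
  · by_cases hlow : t ∈ lowerBounds S
    · filter_upwards [self_mem_nhdsWithin] with s hs
      exact iff_of_false (fun hsS => (hlow hsS).not_gt hs) (fun h => h.2 hlow)
    · obtain ⟨u, huS, hut⟩ : ∃ u ∈ S, u < t := by simpa [lowerBounds] using hlow
      filter_upwards [Ioo_mem_nhdsLT hut] with s hs
      exact iff_of_true (hconv.out huS ht (Set.Ioo_subset_Icc_self hs)) ⟨ht, hlow⟩
  · filter_upwards [nhdsWithin_le_nhds (hS.isOpen_compl.mem_nhds ht)] with s hs
    exact iff_of_false hs (fun h => ht h.1)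

theorem IsCompact.ite_nonempty_eq_sum_ite_isLeast {S : Set ℝ} (hS : IsCompact S) {T : Finset ℝ}
    (hT : sInf S ∈ T) :
    (if S.Nonempty then 1 else 0 : ℤ) = ∑ t ∈ T, if IsLeast S t then 1 else 0 := by
  rcases S.eq_empty_or_nonempty with rfl | hne
  · simp [IsLeast]
  · have hleast (t : ℝ) : IsLeast S t ↔ sInf S = t :=
      ⟨(hS.isLeast_sInf hne).unique, fun h => h ▸ hS.isLeast_sInf hne⟩
    simp [hleast, hne, hT]

theorem sum_mul_ite_isLeast_eq_zero {k : ℕ} {K : Fin k → Set ℝ} {a : Fin k → ℤ}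
    (hK : ∀ i, IsClosed (K i)) (hconv : ∀ i, Convex ℝ (K i))
    (hrel : ∀ v, ∑ i, a i * (if v ∈ K i then 1 else 0) = 0) (t : ℝ) :
    ∑ i, a i * (if IsLeast (K i) t then 1 else 0) = 0 := by
  obtain ⟨s, hs⟩ := (eventually_all.2 fun i =>
    (hconv i).ordConnected.eventually_nhdsLT_mem_iff (hK i) t).exists
  have hleast (i : Fin k) : (if IsLeast (K i) t then 1 else 0 : ℤ) =
      (if t ∈ K i then 1 else 0) - (if s ∈ K i then 1 else 0) := by
    rw [hs i]; by_cases ht : t ∈ K i <;> by_cases hlow : t ∈ lowerBounds (K i) <;>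
      simp [IsLeast, ht, hlow]
  simp only [hleast, mul_sub, Finset.sum_sub_distrib, hrel, sub_self]

end

/-- `[K.Nonempty]` is the Euler characteristic of a compact convex set `K`. -/
def EulerValuative (E : Type*) [AddCommGroup E] [Module ℝ E] [TopologicalSpace E] : Prop :=
  ∀ (k : ℕ) (K : Fin k → Set E) (a : Fin k → ℤ), (∀ i, IsCompact (K i)) → (∀ i, Convex ℝ (K i)) →
    (∀ v, ∑ i, a i * (if v ∈ K i then 1 else 0) = 0) →
    ∑ i, a i * (if (K i).Nonempty then 1 else 0) = 0

namespace EulerValuative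

variable {E F : Type*} [AddCommGroup E] [Module ℝ E] [TopologicalSpace E]
  [AddCommGroup F] [Module ℝ F] [TopologicalSpace F]

theorem of_subsingleton [Subsingleton E] : EulerValuative E := by
  intro k K a _ _ hrel
  have hmem (i : Fin k) : (K i).Nonempty ↔ 0 ∈ K i :=
    ⟨fun ⟨v, hv⟩ => Subsingleton.elim v 0 ▸ hv, fun h => ⟨0, h⟩⟩
  simpa only [hmem] using hrel 0

theorem real : EulerValuative ℝ := by
  intro k K a hK hconv hrel
  let T := Finset.univ.image fun i => sInf (K i)
  calc ∑ i, a i * (if (K i).Nonempty then 1 else 0)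
      = ∑ t ∈ T, ∑ i, a i * (if IsLeast (K i) t then 1 else 0) := by
        simp only [Finset.sum_comm (s := T), ← Finset.mul_sum]
        congr! 2 with i
        exact (hK i).ite_nonempty_eq_sum_ite_isLeast (Finset.mem_image_of_mem _ (Finset.mem_univ i))
    _ = 0 := Finset.sum_eq_zero fun t _ =>
        sum_mul_ite_isLeast_eq_zero (fun i => (hK i).isClosed) hconv hrel t

theorem prod [T1Space E] (hE : EulerValuative E) (hF : EulerValuative F) :
    EulerValuative (E × F) := by
  intro k K a hK hconv hrel
  have hfibre (y : E) : ∑ i, a i * (if y ∈ Prod.fst '' K i then 1 else 0) = 0 := by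
    have hrange : Set.range (Prod.mk y : F → E × F) = Prod.fst ⁻¹' {y} := by
      ext ⟨y', t⟩; simp [eq_comm]
    have key := hF k (fun i => Prod.mk y ⁻¹' K i) a
      (fun i => (isInducing_prodMkRight y).isCompact_preimage
        (hrange ▸ isClosed_singleton.preimage continuous_fst) (hK i))
      (fun i => (hconv i).affine_preimage ((AffineMap.const ℝ F y).prod (AffineMap.id ℝ F)))
      (fun t => hrel (y, t))
    have hne (i : Fin k) : (Prod.mk y ⁻¹' K i).Nonempty ↔ y ∈ Prod.fst '' K i :=
      ⟨fun ⟨t, ht⟩ => ⟨(y, t), ht, rfl⟩, fun ⟨⟨y', t⟩, ht, hy⟩ => ⟨t, hy ▸ ht⟩⟩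
    simpa only [hne] using key
  simpa only [Set.image_nonempty] using hE k (fun i => Prod.fst '' K i) a
    (fun i => (hK i).image continuous_fst) (fun i => (hconv i).linear_image (LinearMap.fst ℝ E F))
    hfibre

theorem of_continuousLinearEquiv (e : E ≃L[ℝ] F) (hE : EulerValuative E) : EulerValuative F := by
  intro k K a hK hconv hrel
  have hne (i : Fin k) : (e ⁻¹' K i).Nonempty ↔ (K i).Nonempty := e.surjective.nonempty_preimage
  simpa only [hne] using hE k (fun i => e ⁻¹' K i) a
    (fun i => e.toHomeomorph.isCompact_preimage.2 (hK i))
    (fun i => (hconv i).linear_preimage (e : E →ₗ[ℝ] F)) (fun v => hrel (e v))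

theorem pi : ∀ q : ℕ, EulerValuative (Fin q → ℝ)
  | 0 => of_subsingleton
  | q + 1 => of_continuousLinearEquiv (Fin.consEquivL ℝ fun _ => ℝ) (real.prod (pi q))

end EulerValuative

namespace CavePaper

variable {p : ℕ} {m : Fin p → ℕ} {rk : Finset (Fin p) → ℕ}

theorem isCompact_baseSet : IsCompact (BaseSet rk) := by
  refine isCompact_Icc.of_isClosed_subset ?_
    (fun v hv => ⟨hv.1, fun i => by simpa using hv.2.2 {i}⟩ :
      BaseSet rk ⊆ Set.Icc 0 fun i => (rk {i} : ℝ))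
  simp only [BaseSet, Set.ofPred_and, Set.ofPred_forall]
  refine .inter (isClosed_iInter fun i => isClosed_le ?_ ?_)
    (.inter (isClosed_eq ?_ ?_) (isClosed_iInter fun J => isClosed_le ?_ ?_)) <;> fun_prop

theorem convex_baseSet : Convex ℝ (BaseSet rk) := by
  rintro x ⟨hx0, hxs, hxJ⟩ y ⟨hy0, hys, hyJ⟩ a b ha hb hab
  simp only [BaseSet, Set.mem_ofPred_eq, Pi.add_apply, Pi.smul_apply, smul_eq_mul,
    Finset.sum_add_distrib, ← Finset.mul_sum]
  refine ⟨fun i => by have := hx0 i; have := hy0 i; positivity, ?_, fun J => ?_⟩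
  · rw [hxs, hys, ← add_mul, hab, one_mul]
  · nlinarith [hxJ J, hyJ J]

theorem sum_lt_sum_of_forall_lt (hp : 1 ≤ p) {n w : Fin p → ℤ} (h : ∀ i, n i < w i) :
    ∑ i, n i < ∑ i, w i :=
  Finset.sum_lt_sum_of_nonempty ⟨⟨0, hp⟩, Finset.mem_univ _⟩ fun i _ => h i

theorem mobius_of_not_inIndep {n : Fin p → ℤ} (h : ¬ inIndep rk n) : mobius rk n = 0 := by
  rw [mobius, if_neg h]

theorem inIndep_of_le {n w : Fin p → ℤ} (hn : ∀ i, 0 ≤ n i) (hnw : n ≤ w) (hw : inIndep rk w) :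
    inIndep rk n :=
  ⟨hn, fun J => (Finset.sum_le_sum fun j _ => hnw j).trans (hw.2 J)⟩

namespace IsPolymatroid

theorem sum_union_eq_of_sum_eq (hrk : IsPolymatroid m rk) {w : Fin p → ℤ} (hw : inIndep rk w)
    {J₁ J₂ : Finset (Fin p)} (h₁ : ∑ j ∈ J₁, w j = rk J₁) (h₂ : ∑ j ∈ J₂, w j = rk J₂) :
    ∑ j ∈ J₁ ∪ J₂, w j = rk (J₁ ∪ J₂) := by
  have hsub : (rk (J₁ ∩ J₂) + rk (J₁ ∪ J₂) : ℤ) ≤ rk J₁ + rk J₂ := mod_cast hrk.2.2.1 J₁ J₂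
  have := hw.2 (J₁ ∪ J₂)
  have := hw.2 (J₁ ∩ J₂)
  have : ∑ j ∈ J₁ ∪ J₂, w j + ∑ j ∈ J₁ ∩ J₂, w j = ∑ j ∈ J₁, w j + ∑ j ∈ J₂, w j :=
    Finset.sum_union_inter
  omega

theorem exists_inIndep_add_single (hrk : IsPolymatroid m rk) {w : Fin p → ℤ} (hw : inIndep rk w)
    (hlt : ∑ i, w i < rk Finset.univ) : ∃ i, inIndep rk (w + Pi.single i 1) := by
  -- the union of all tight sets is tight, so some `i` lies in no tight set
  let U := (Finset.univ.filter fun J => ∑ j ∈ J, w j = rk J).sup id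
  have hU : ∑ j ∈ U, w j = rk U :=
    Finset.sup_induction (p := fun J => ∑ j ∈ J, w j = rk J) (by simp [hrk.1])
      (fun _ h₁ _ h₂ => hrk.sum_union_eq_of_sum_eq hw h₁ h₂) (fun _ hJ => (Finset.mem_filter.1 hJ).2)
  obtain ⟨i, hiU⟩ : ∃ i, i ∉ U := by
    by_contra! h
    rw [Finset.eq_univ_of_forall h] at hU
    omega
  refine ⟨i, fun j => ?_, fun J => ?_⟩
  · have := hw.1 j
    simp only [Pi.add_apply, Pi.single_apply]
    split_ifs <;> omega
  rw [Pi.add_def, Finset.sum_add_distrib, Finset.sum_pi_single']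
  split_ifs with hiJ
  · have hne : ∑ j ∈ J, w j ≠ rk J := fun h =>
      hiU (Finset.le_sup (f := id) (Finset.mem_filter.2 ⟨Finset.mem_univ J, h⟩) hiJ)
    have := hw.2 J
    omega
  · simpa using hw.2 J

theorem exists_inBase_ge (hrk : IsPolymatroid m rk) {w : Fin p → ℤ} (hw : inIndep rk w) :
    ∃ b, inBase rk b ∧ w ≤ b := by
  let C := (Finset.Icc w fun i => (rk {i} : ℤ)).filter (inIndep rk)
  have hC {v : Fin p → ℤ} (hwv : w ≤ v) (hv : inIndep rk v) : v ∈ C :=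
    Finset.mem_filter.2 ⟨Finset.mem_Icc.2 ⟨hwv, fun i => by simpa using hv.2 {i}⟩, hv⟩
  obtain ⟨b, hbC, hmax⟩ := C.exists_max_image (fun v => ∑ i, v i) ⟨w, hC le_rfl hw⟩
  obtain ⟨hbIcc, hb⟩ := Finset.mem_filter.1 hbC
  have hwb := (Finset.mem_Icc.1 hbIcc).1
  refine ⟨b, ⟨hb, ?_⟩, hwb⟩
  by_contra hne
  obtain ⟨i, hi⟩ := hrk.exists_inIndep_add_single hb (lt_of_le_of_ne (by simpa using hb.2 _) hne)
  have := hmax _ (hC (hwb.trans (le_add_of_nonneg_right (Pi.single_nonneg.2 zero_le_one))) hi)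
  simp [Finset.sum_add_distrib] at this

theorem inIndep_iff_nonempty (hrk : IsPolymatroid m rk) {w : Fin p → ℤ} (hw : ∀ i, 0 ≤ w i) :
    inIndep rk w ↔ (BaseSet rk ∩ Set.Ici fun i => (w i : ℝ)).Nonempty := by
  constructor
  · intro hI
    obtain ⟨b, hb, hwb⟩ := hrk.exists_inBase_ge hI
    refine ⟨fun i => b i, ⟨fun i => ?_, ?_, fun J => ?_⟩, fun i => ?_⟩ <;> dsimp only
    exacts [mod_cast hb.1.1 i, mod_cast hb.2, mod_cast hb.1.2 J, mod_cast hwb i]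
  · rintro ⟨v, hv, hwv⟩
    refine ⟨hw, fun J => ?_⟩
    have : ((∑ j ∈ J, w j : ℤ) : ℝ) ≤ rk J := by
      push_cast
      exact (Finset.sum_le_sum fun j _ => hwv j).trans (hv.2.2 J)
    exact_mod_cast this

end IsPolymatroid

theorem sum_mul_ite_inIndep_eq_zero {k : ℕ} {P : Fin k → Finset (Fin p) → ℕ}
    (hP : ∀ i, IsPolymatroid m (P i)) {a : Fin k → ℤ}
    (hval : ∀ v : Fin p → ℝ, ∑ i, a i * (if v ∈ BaseSet (P i) then (1 : ℤ) else 0) = 0)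
    {w : Fin p → ℤ} (hw : ∀ i, 0 ≤ w i) :
    ∑ i, a i * (if inIndep (P i) w then 1 else 0) = 0 := by
  let w' : Fin p → ℝ := fun i => w i
  simpa only [(hP _).inIndep_iff_nonempty hw] using
    EulerValuative.pi p k (fun i => BaseSet (P i) ∩ Set.Ici w') a
      (fun _ => isCompact_baseSet.inter_right isClosed_Ici)
      (fun _ => convex_baseSet.inter (convex_Ici w'))
      fun v => by
        by_cases hv : w' ≤ v
        · simpa [hv] using hval v
        · simp [hv]

theorem IsPolymatroid.mobius_eq_sub_sum (hp : 1 ≤ p) (hrk : IsPolymatroid m rk)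
    {n : Fin p → ℤ} (hn : ∀ i, 0 ≤ n i) :
    mobius rk n = (if inIndep rk n then 1 else 0) -
      ∑ w ∈ (Finset.Icc 0 fun i => (m i : ℤ)).filter (fun w => ∀ i, n i < w i), mobius rk w := by
  let S := (Finset.Icc (fun _ => (0 : ℤ)) (fun i => (rk {i} : ℤ))).filter
    (fun w => (∀ i, n i < w i) ∧ (∑ i, n i) < (∑ i, w i) ∧ inIndep rk w)
  have hS : ∑ w ∈ (Finset.Icc 0 fun i => (m i : ℤ)).filter (fun w => ∀ i, n i < w i),
      mobius rk w = ∑ w ∈ S, mobius rk w := by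
    refine (Finset.sum_subset (fun w hw => ?_) fun w hw hwS => ?_).symm
    · simp only [S, Finset.mem_filter, Finset.mem_Icc, Pi.le_def] at hw ⊢
      exact ⟨⟨hw.1.1, fun i => (hw.1.2 i).trans (mod_cast hrk.2.2.2 i)⟩, hw.2.1⟩
    · refine mobius_of_not_inIndep fun hI => hwS ?_
      simp only [S, Finset.mem_filter, Finset.mem_Icc, Pi.le_def] at hw ⊢
      exact ⟨⟨hw.1.1, fun i => by simpa using hI.2 {i}⟩, hw.2, sum_lt_sum_of_forall_lt hp hw.2, hI⟩
  have hS_empty (h : inIndep rk n → inBase rk n) : S = ∅ := by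
    refine Finset.filter_eq_empty_iff.2 fun w _ ⟨hnw, hlt, hw⟩ => ?_
    have hB := h (inIndep_of_le hn (fun i => (hnw i).le) hw)
    linarith [hw.2 Finset.univ, hB.2]
  rw [hS, mobius, Finset.sum_attach]
  split_ifs with hI hB
  · simp [hS_empty fun _ => hB]
  · rfl
  · simp [hS_empty fun h => absurd h hI]

/-- For every `n ∈ ℤ^p`, the function `𝒫 ↦ μ_𝒫(n)` is valuative:
if a `ℤ`-linear combination of indicator functions of base polytopes of polymatroids
(with common cage `m`) vanishes identically on `ℝ^p`, then the same combination of
Möbius values at `n` vanishes. -/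
theorem mobius_valuative
    (p : ℕ) (hp : 1 ≤ p) (m : Fin p → ℕ) (n : Fin p → ℤ) (k : ℕ)
    (P : Fin k → Finset (Fin p) → ℕ) (hP : ∀ i, IsPolymatroid m (P i))
    (a : Fin k → ℤ)
    (hval : ∀ v : Fin p → ℝ,
      (∑ i, a i * (if v ∈ BaseSet (P i) then (1 : ℤ) else 0)) = 0) :
    (∑ i, a i * mobius (P i) n) = 0 := by
  by_cases hn : ∀ i, 0 ≤ n i
  swap
  · simp [mobius_of_not_inIndep fun h => hn h.1]
  induction hd : ((∑ i, (m i : ℤ)) - ∑ i, n i).toNat using Nat.strong_induction_on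
    generalizing n with
  | _ d ih =>
  simp only [(hP _).mobius_eq_sub_sum hp hn, mul_sub, Finset.mul_sum, Finset.sum_sub_distrib]
  rw [Finset.sum_comm, sum_mul_ite_inIndep_eq_zero hP hval hn, zero_sub, neg_eq_zero]
  refine Finset.sum_eq_zero fun w hw => ?_
  obtain ⟨⟨hw0, hwm⟩, hnw⟩ := by simpa only [Finset.mem_filter, Finset.mem_Icc] using hw
  have hnw_sum : ∑ i, n i < ∑ i, w i := sum_lt_sum_of_forall_lt hp hnw
  have hwm_sum : ∑ i, w i ≤ ∑ i, (m i : ℤ) := Finset.sum_le_sum fun i _ => hwm i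
  exact ih _ (by omega) w hw0 rfl

end CavePaper
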